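/- arXiv:2112.07897 — 8 statements merged into one kernel-verified Lean document; each statement's English description precedes it below -/
import Mathlib

section
/- For all integers n ≥ k ≥ 1, every graph G on n vertices that is uniquely k-colorable has at least (k−1)·n − k(k−1)/2 edges. -/
/-!
For colors `i ≠ j`, the subgraph induced by the two color classes is connected: otherwise,
swapping `i` and `j` on one of its components (a Kempe chain) gives a coloring inducing a
different partition. So it has at least `nᵢ + nⱼ - 1` edges, all of which the coloring sends
to the edge `s(i, j)` of the complete graph on the colors. Summing over the `k(k-1)/2` edges
of that complete graph counts every vertex `k - 1` times, giving `(k-1)n - k(k-1)/2` edges.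
-/

open Finset

theorem Equiv.swap_apply_eq_iff_ne_of_mem_pair {α : Type*} [DecidableEq α] {i j x y : α}
    (hij : i ≠ j) (hx : x ∈ ({i, j} : Set α)) (hy : y ∈ ({i, j} : Set α)) :
    Equiv.swap i j x = y ↔ x ≠ y := by
  rcases hx with rfl | rfl <;> rcases hy with rfl | rfl <;> simp [hij, hij.symm]

theorem SimpleGraph.sum_card_filter_apply_mem_eq_sum_degree {V α : Type*} [Fintype V]
    [Fintype α] [DecidableEq α] (H : SimpleGraph α) [DecidableRel H.Adj] (f : V → α) :
    ∑ e ∈ H.edgeFinset, #{v | f v ∈ e} = ∑ v, H.degree (f v) := by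
  simp_rw [← H.card_incidenceFinset_eq_degree, H.incidenceFinset_eq_filter]
  exact sum_card_bipartiteAbove_eq_sum_card_bipartiteBelow (fun e v => f v ∈ e)

namespace SimpleGraph.Coloring

variable {V α : Type*} {G : SimpleGraph V}

abbrev kempeGraph (C : G.Coloring α) (i j : α) : SimpleGraph (C ⁻¹' {i, j}) :=
  G.induce (C ⁻¹' {i, j})

def kempeChain (C : G.Coloring α) {i j : α} (u : C ⁻¹' {i, j}) : Set V :=
  Subtype.val '' {v | (C.kempeGraph i j).Reachable u v}

theorem mem_kempeChain_of_adj (C : G.Coloring α) {i j : α} {u : C ⁻¹' {i, j}} {a b : V}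
    (ha : a ∈ C.kempeChain u) (hb : C b ∈ ({i, j} : Set α)) (hab : G.Adj a b) :
    b ∈ C.kempeChain u := by
  obtain ⟨a, hua, rfl⟩ := ha
  exact ⟨⟨b, hb⟩, hua.trans (SimpleGraph.Adj.reachable (G := C.kempeGraph i j) hab), rfl⟩

variable [DecidableEq α]

theorem swap_apply_ne_of_adj_of_mem_kempeChain (C : G.Coloring α) {i j : α}
    {u : C ⁻¹' {i, j}} {a b : V} (hab : G.Adj a b) (ha : a ∈ C.kempeChain u)
    (hb : b ∉ C.kempeChain u) : Equiv.swap i j (C a) ≠ C b := by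
  -- `b` is outside the chain but adjacent to it, so its color is neither `i` nor `j`.
  have hb' : C b ≠ i ∧ C b ≠ j := by
    simpa [not_or] using fun h => hb (C.mem_kempeChain_of_adj ha h hab)
  rw [← Equiv.swap_apply_of_ne_of_ne hb'.1 hb'.2]
  exact (Equiv.swap i j).injective.ne (C.valid hab)

open Classical in
noncomputable def kempeSwap (C : G.Coloring α) {i j : α} (u : C ⁻¹' {i, j}) : G.Coloring α :=
  Coloring.mk (fun v => if v ∈ C.kempeChain u then Equiv.swap i j (C v) else C v) <| by
    intro a b hab
    by_cases ha : a ∈ C.kempeChain u <;> by_cases hb : b ∈ C.kempeChain u <;>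
      simp only [ha, hb, if_true, if_false]
    · exact (Equiv.swap i j).injective.ne (C.valid hab)
    · exact C.swap_apply_ne_of_adj_of_mem_kempeChain hab ha hb
    · exact (C.swap_apply_ne_of_adj_of_mem_kempeChain hab.symm hb ha).symm
    · exact C.valid hab

theorem kempeSwap_apply_of_mem (C : G.Coloring α) {i j : α} {u : C ⁻¹' {i, j}} {v : V}
    (hv : v ∈ C.kempeChain u) : C.kempeSwap u v = Equiv.swap i j (C v) :=
  if_pos hv

theorem kempeSwap_apply_of_not_mem (C : G.Coloring α) {i j : α} {u : C ⁻¹' {i, j}} {v : V}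
    (hv : v ∉ C.kempeChain u) : C.kempeSwap u v = C v :=
  if_neg hv

theorem preconnected_kempeGraph (C : G.Coloring α)
    (huniq : ∀ C' : G.Coloring α, ∀ u v, C' u = C' v ↔ C u = C v) {i j : α} (hij : i ≠ j) :
    (C.kempeGraph i j).Preconnected := by
  intro u v
  by_contra huv
  have hu : (u : V) ∈ C.kempeChain u := ⟨u, .refl u, rfl⟩
  have hv : (v : V) ∉ C.kempeChain u := by
    rintro ⟨w, huw, hw⟩
    exact huv (Subtype.ext hw ▸ huw)
  -- The swap recolors `u` but not `v`, so it merges their classes iff they were distinct.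
  have := huniq (C.kempeSwap u) u v
  rw [C.kempeSwap_apply_of_mem hu, C.kempeSwap_apply_of_not_mem hv,
    Equiv.swap_apply_eq_iff_ne_of_mem_pair hij u.2 v.2] at this
  exact (iff_not_self this.symm).elim

theorem map_eq_of_mem_edgeSet_kempeGraph (C : G.Coloring α) {i j : α} (hij : i ≠ j)
    {e : Sym2 (C ⁻¹' {i, j})} (he : e ∈ (C.kempeGraph i j).edgeSet) :
    (e.map Subtype.val).map C = s(i, j) := by
  induction e using Sym2.ind with
  | h a b =>
    have hb : C b = Equiv.swap i j (C a) :=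
      ((Equiv.swap_apply_eq_iff_ne_of_mem_pair hij a.2 b.2).2 (C.valid he)).symm
    obtain ha | ha : C a = i ∨ C a = j := a.2 <;> simp [ha, hb]

variable [Fintype V] [DecidableRel G.Adj]

theorem card_preimage_pair_le (C : G.Coloring α) {i j : α} (hij : i ≠ j)
    (hC : (C.kempeGraph i j).Preconnected) :
    #{v | C v ∈ s(i, j)} ≤ #{e ∈ G.edgeFinset | e.map C = s(i, j)} + 1 := by
  classical
  have hcard : #{v | C v ∈ s(i, j)} = Nat.card (C ⁻¹' {i, j}) := by
    rw [Nat.card_eq_card_toFinset]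
    congr 1
    ext v
    simp
  rcases isEmpty_or_nonempty (C ⁻¹' {i, j}) with hS | hS
  · rw [hcard, Nat.card_of_isEmpty]
    exact Nat.zero_le _
  let f : (C.kempeGraph i j).edgeSet → {e ∈ G.edgeFinset | e.map C = s(i, j)} := fun e =>
    ⟨_, mem_filter.2 ⟨G.mem_edgeFinset.2 ((Embedding.induce _).toHom.mapEdgeSet e).2,
      C.map_eq_of_mem_edgeSet_kempeGraph hij e.2⟩⟩
  have hf : Function.Injective f := fun e₁ e₂ h =>
    (Embedding.induce _).mapEdgeSet.injective <| Subtype.ext <| congrArg (fun e => e.1) h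
  calc #{v | C v ∈ s(i, j)} = Nat.card (C ⁻¹' {i, j}) := hcard
    _ ≤ Nat.card (C.kempeGraph i j).edgeSet + 1 :=
      (⟨hC⟩ : (C.kempeGraph i j).Connected).card_vert_le_card_edgeSet_add_one
    _ ≤ #{e ∈ G.edgeFinset | e.map C = s(i, j)} + 1 := by
      gcongr
      rw [← Nat.card_eq_finsetCard]
      exact Nat.card_le_card_of_injective f hf

theorem card_mul_pred_le_card_edgeFinset_add_choose [Fintype α] (C : G.Coloring α)
    (huniq : ∀ C' : G.Coloring α, ∀ u v, C' u = C' v ↔ C u = C v) :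
    Fintype.card V * (Fintype.card α - 1) ≤ #G.edgeFinset + (Fintype.card α).choose 2 := by
  calc Fintype.card V * (Fintype.card α - 1)
      = ∑ e ∈ (⊤ : SimpleGraph α).edgeFinset, #{v | C v ∈ e} := by
        rw [sum_card_filter_apply_mem_eq_sum_degree]
        simp
    _ ≤ ∑ e ∈ (⊤ : SimpleGraph α).edgeFinset, (#{e' ∈ G.edgeFinset | e'.map C = e} + 1) := by
        refine sum_le_sum fun e he => ?_
        induction e using Sym2.ind with
        | h i j =>
          have hij : i ≠ j := by simpa using he
          exact C.card_preimage_pair_le hij (C.preconnected_kempeGraph huniq hij)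
    _ = #G.edgeFinset + (Fintype.card α).choose 2 := by
        have hfibers : #G.edgeFinset =
            ∑ e ∈ (⊤ : SimpleGraph α).edgeFinset, #{e' ∈ G.edgeFinset | e'.map C = e} :=
          card_eq_sum_card_fiberwise fun e he =>
            mem_edgeFinset.2 (C.mapEdgeSet ⟨e, G.mem_edgeFinset.1 he⟩).2
        rw [sum_add_distrib, ← hfibers, sum_const, smul_eq_mul, mul_one,
          card_edgeFinset_top_eq_card_choose_two]

end SimpleGraph.Coloring

theorem uniquely_colorable_edge_lower_bound_general (n k : ℕ)
    (G : SimpleGraph (Fin n)) [DecidableRel G.Adj]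
    (χ : G.Coloring (Fin k))
    (huniq : ∀ (χ₁ χ₂ : G.Coloring (Fin k)) (u v : Fin n), χ₁ u = χ₁ v ↔ χ₂ u = χ₂ v) :
    ((k : ℤ) - 1) * n - k * (k - 1) / 2 ≤ (G.edgeFinset.card : ℤ) := by
  have h := χ.card_mul_pred_le_card_edgeFinset_add_choose fun χ' => huniq χ' χ
  rw [Fintype.card_fin, Fintype.card_fin, Nat.choose_two_right] at h
  rcases k with _ | k
  · simp
  · have hchoose : ((k + 1 : ℕ) : ℤ) * ((k + 1 : ℕ) - 1) / 2 = (((k + 1) * k / 2 : ℕ) : ℤ) := by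
      push_cast [Int.natCast_div]
      ring_nf
    rw [hchoose]
    simp only [Nat.add_sub_cancel] at h
    push_cast
    zify at h
    linarith

/-- For all integers `n ≥ k ≥ 1`, every graph `G` on `n` vertices that is uniquely
`k`-colorable (it admits a proper `k`-coloring using all `k` colors, and any two proper
`k`-colorings induce the same partition of the vertices into color classes) has at least
`(k-1)·n - k(k-1)/2` edges. -/
theorem uniquely_colorable_edge_lower_bound (n k : ℕ) (hk : 1 ≤ k) (hkn : k ≤ n)
    (G : SimpleGraph (Fin n)) [DecidableRel G.Adj]
    (χ : G.Coloring (Fin k)) (hsurj : Function.Surjective χ)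
    (huniq : ∀ (χ₁ χ₂ : G.Coloring (Fin k)) (u v : Fin n), χ₁ u = χ₁ v ↔ χ₂ u = χ₂ v) :
    ((k : ℤ) - 1) * n - k * (k - 1) / 2 ≤ (G.edgeFinset.card : ℤ) :=
  uniquely_colorable_edge_lower_bound_general n k G χ huniq
end

section
/- Let k ≥ 2, let G be a uniquely k-colorable graph, let χ be a proper k-coloring of G using all k colors, and let I₁, …, I_k be its color classes. Then for every pair of distinct indices i ≠ j, the subgraph of G induced on the vertex set I_i ∪ I_j is connected. -/
/-!
If two vertices `u, v` of `χ⁻¹(i) ∪ χ⁻¹(j)` lay in different components of the induced subgraph,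
swapping the colors `i` and `j` on the component of `u` (a Kempe change) would give a proper
coloring in which `u` and `v` have equal colors exactly when they had different colors under `χ`,
contradicting uniqueness of the color partition.
-/

theorem Equiv.swap_apply_eq_iff_ne {α : Type*} [DecidableEq α] {a b x y : α} (hab : a ≠ b)
    (hx : x = a ∨ x = b) (hy : y = a ∨ y = b) : Equiv.swap a b x = y ↔ x ≠ y := by
  rcases hx with rfl | rfl <;> rcases hy with rfl | rfl <;> simp [hab, hab.symm]

namespace SimpleGraph.Coloring

variable {V α : Type*} {G : SimpleGraph V} [DecidableEq α]

def swapOn (χ : G.Coloring α) (i j : α) (T : Set V) [DecidablePred (· ∈ T)]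
    (hT : ∀ a b, G.Adj a b → a ∈ T → b ∉ T → χ b ≠ i ∧ χ b ≠ j) : G.Coloring α :=
  Coloring.mk (fun w => if w ∈ T then Equiv.swap i j (χ w) else χ w) <| by
    have boundary : ∀ a b, G.Adj a b → a ∈ T → b ∉ T → Equiv.swap i j (χ a) ≠ χ b := by
      intro a b hab ha hb h
      obtain ⟨hbi, hbj⟩ := hT a b hab ha hb
      rw [Equiv.swap_apply_eq_iff, Equiv.swap_apply_of_ne_of_ne hbi hbj] at h
      exact χ.valid hab h
    intro a b hab
    by_cases ha : a ∈ T <;> by_cases hb : b ∈ T <;> simp only [ha, hb, if_true, if_false]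
    · exact fun h => χ.valid hab ((Equiv.swap i j).injective h)
    · exact boundary a b hab ha hb
    · exact fun h => boundary b a hab.symm hb ha h.symm
    · exact χ.valid hab

theorem swapOn_apply_of_mem (χ : G.Coloring α) {i j : α} {T : Set V} [DecidablePred (· ∈ T)]
    (hT : ∀ a b, G.Adj a b → a ∈ T → b ∉ T → χ b ≠ i ∧ χ b ≠ j) {w : V} (hw : w ∈ T) :
    χ.swapOn i j T hT w = Equiv.swap i j (χ w) :=
  if_pos hw

theorem swapOn_apply_of_notMem (χ : G.Coloring α) {i j : α} {T : Set V} [DecidablePred (· ∈ T)]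
    (hT : ∀ a b, G.Adj a b → a ∈ T → b ∉ T → χ b ≠ i ∧ χ b ≠ j) {w : V} (hw : w ∉ T) :
    χ.swapOn i j T hT w = χ w :=
  if_neg hw

theorem preconnected_induce_pair_of_forall_eq_iff (χ : G.Coloring α)
    (huniq : ∀ (χ' : G.Coloring α) (u v : V), χ u = χ v ↔ χ' u = χ' v) {i j : α} (hij : i ≠ j) :
    (G.induce (χ ⁻¹' {i} ∪ χ ⁻¹' {j})).Preconnected := by
  classical
  rintro ⟨u, hu⟩ ⟨v, hv⟩
  by_contra huv
  set T : Set V := {w | ∃ hw, (G.induce (χ ⁻¹' {i} ∪ χ ⁻¹' {j})).Reachable ⟨u, hu⟩ ⟨w, hw⟩}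
  have hT : ∀ a b, G.Adj a b → a ∈ T → b ∉ T → χ b ≠ i ∧ χ b ≠ j := by
    rintro a b hab ⟨ha, hua⟩ hb
    refine not_or.mp fun hbS => hb ⟨hbS, hua.trans ?_⟩
    exact Adj.reachable (G := G.induce _) (u := ⟨a, ha⟩) (v := ⟨b, hbS⟩) hab
  have key := huniq (χ.swapOn i j T hT) u v
  rw [swapOn_apply_of_mem χ hT ⟨hu, .rfl⟩, swapOn_apply_of_notMem χ hT fun ⟨_, h⟩ => huv h,
    Equiv.swap_apply_eq_iff_ne hij hu hv] at key
  exact iff_not_self key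

end SimpleGraph.Coloring

theorem uniquely_colorable_pair_classes_connected_general {V : Type*} (k : ℕ)
    (G : SimpleGraph V)
    (χ : G.Coloring (Fin k)) (hsurj : Function.Surjective χ)
    (huniq : ∀ (χ₁ χ₂ : G.Coloring (Fin k)) (u v : V), χ₁ u = χ₁ v ↔ χ₂ u = χ₂ v)
    (i j : Fin k) (hij : i ≠ j) :
    (G.induce (⇑χ ⁻¹' {i} ∪ ⇑χ ⁻¹' {j})).Connected := by
  obtain ⟨u, hu⟩ := hsurj i
  have : Nonempty (⇑χ ⁻¹' {i} ∪ ⇑χ ⁻¹' {j} : Set V) := ⟨⟨u, Or.inl hu⟩⟩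
  exact ⟨χ.preconnected_induce_pair_of_forall_eq_iff (huniq χ) hij⟩

/-- If `G` is uniquely `k`-colorable (`k ≥ 2`) with surjective proper `k`-coloring `χ`,
then for any two distinct colors `i ≠ j`, the subgraph of `G` induced on the union of the
color classes `χ⁻¹(i) ∪ χ⁻¹(j)` is connected. -/
theorem uniquely_colorable_pair_classes_connected {V : Type*} [Fintype V] (k : ℕ) (hk : 2 ≤ k)
    (G : SimpleGraph V)
    (χ : G.Coloring (Fin k)) (hsurj : Function.Surjective χ)
    (huniq : ∀ (χ₁ χ₂ : G.Coloring (Fin k)) (u v : V), χ₁ u = χ₁ v ↔ χ₂ u = χ₂ v)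
    (i j : Fin k) (hij : i ≠ j) :
    (G.induce (⇑χ ⁻¹' {i} ∪ ⇑χ ⁻¹' {j})).Connected :=
  uniquely_colorable_pair_classes_connected_general k G χ hsurj huniq i j hij
end

section
/- Every uniquely k-colorable graph with k ≥ 2 is connected. -/
/-!
If `u` and `v` lie in different connected components, permuting the colors on the component
of `u` alone would give a new proper coloring. Choosing the permutation to send the color of `u`
to that of `v` when they differ, and to some other color when they agree (possible with at least
two colors), changes whether `u` and `v` share a color, contradicting uniqueness of the color
classes. Surjectivity onto a nonempty set of colors supplies a vertex.
-/

namespace SimpleGraph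

variable {V α : Type*} {G : SimpleGraph V}

open Classical in
noncomputable def Coloring.recolorComponent (C : G.Coloring α) (c : G.ConnectedComponent)
    (e : Equiv.Perm α) : G.Coloring α :=
  Coloring.mk (fun x => if G.connectedComponentMk x = c then e (C x) else C x) fun {x y} hxy => by
    rw [ConnectedComponent.connectedComponentMk_eq_of_adj hxy]
    split_ifs
    · exact e.injective.ne (C.valid hxy)
    · exact C.valid hxy

theorem Coloring.recolorComponent_apply_of_mem (C : G.Coloring α) (e : Equiv.Perm α) {x : V}
    {c : G.ConnectedComponent} (hx : G.connectedComponentMk x = c) :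
    C.recolorComponent c e x = e (C x) :=
  if_pos hx

theorem Coloring.recolorComponent_apply_of_not_mem (C : G.Coloring α) (e : Equiv.Perm α) {x : V}
    {c : G.ConnectedComponent} (hx : G.connectedComponentMk x ≠ c) :
    C.recolorComponent c e x = C x :=
  if_neg hx

theorem Coloring.preconnected_of_forall_eq_iff [Nontrivial α] (C : G.Coloring α)
    (huniq : ∀ (C' : G.Coloring α) (u v : V), C u = C v ↔ C' u = C' v) : G.Preconnected := by
  classical
  intro u v
  by_contra huv
  obtain ⟨c, hc⟩ : ∃ c, c = C v ↔ C u ≠ C v := by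
    by_cases h : C u = C v
    · obtain ⟨c, hc⟩ := exists_ne (C v)
      exact ⟨c, by simp [hc, h]⟩
    · exact ⟨C v, by simp [h]⟩
  let C' := C.recolorComponent (G.connectedComponentMk u) (Equiv.swap (C u) c)
  have hu : C' u = c := by
    rw [C.recolorComponent_apply_of_mem _ rfl, Equiv.swap_apply_left]
  have hv : C' v = C v :=
    C.recolorComponent_apply_of_not_mem _ fun h => huv (ConnectedComponent.eq.mp h.symm)
  have := huniq C' u v
  rw [hu, hv, hc] at this
  exact (iff_not_self this).elim

end SimpleGraph

theorem uniquely_colorable_connected_general {V : Type*} (k : ℕ) (hk : 2 ≤ k)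
    (G : SimpleGraph V)
    (χ : G.Coloring (Fin k)) (hsurj : Function.Surjective χ)
    (huniq : ∀ (χ₁ χ₂ : G.Coloring (Fin k)) (u v : V), χ₁ u = χ₁ v ↔ χ₂ u = χ₂ v) :
    G.Connected := by
  have : Nontrivial (Fin k) := Fin.nontrivial_iff_two_le.mpr hk
  obtain ⟨v, -⟩ := hsurj ⟨0, by omega⟩
  exact (G.connected_iff).mpr ⟨χ.preconnected_of_forall_eq_iff (huniq χ), ⟨v⟩⟩

/-- Every uniquely `k`-colorable graph with `k ≥ 2` is connected. -/
theorem uniquely_colorable_connected {V : Type*} [Fintype V] (k : ℕ) (hk : 2 ≤ k)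
    (G : SimpleGraph V)
    (χ : G.Coloring (Fin k)) (hsurj : Function.Surjective χ)
    (huniq : ∀ (χ₁ χ₂ : G.Coloring (Fin k)) (u v : V), χ₁ u = χ₁ v ↔ χ₂ u = χ₂ v) :
    G.Connected :=
  uniquely_colorable_connected_general k hk G χ hsurj huniq
end

section
/- If G is a uniquely k-colorable graph with k ≥ 2, then every vertex of G has degree at least k − 1. -/
/-!
If some vertex `v` had fewer than `k - 1` neighbours, its closed neighbourhood would miss one of
the `k` colours, say `c`. Recolouring `v` with `c` gives a second proper colouring, in which `v`
shares its colour with any vertex of colour `c` (one exists by surjectivity); in the original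
colouring they differ, contradicting uniqueness of the colour partition.
-/

namespace SimpleGraph

variable {V α : Type*} {G : SimpleGraph V}

section Recolor

variable [DecidableEq V]

def Coloring.recolor (C : G.Coloring α) (v : V) (c : α) (hc : ∀ u, G.Adj v u → C u ≠ c) :
    G.Coloring α :=
  Coloring.mk (Function.update C v c) fun {a b} hab => by
    by_cases ha : a = v
    · subst ha
      rw [Function.update_self, Function.update_of_ne (G.ne_of_adj hab).symm]
      exact (hc b hab).symm
    · by_cases hb : b = v
      · subst hb
        rw [Function.update_self, Function.update_of_ne ha]
        exact hc a hab.symm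
      · rw [Function.update_of_ne ha, Function.update_of_ne hb]
        exact C.valid hab

@[simp]
theorem Coloring.recolor_apply (C : G.Coloring α) (v : V) (c : α)
    (hc : ∀ u, G.Adj v u → C u ≠ c) (u : V) : C.recolor v c hc u = Function.update C v c u :=
  rfl

end Recolor

theorem Coloring.exists_color_notMem_closedNeighborhood [Fintype α] (C : G.Coloring α) (v : V)
    [Fintype (G.neighborSet v)] (h : G.degree v + 1 < Fintype.card α) :
    ∃ c, c ≠ C v ∧ ∀ u, G.Adj v u → C u ≠ c := by
  classical
  set S := insert (C v) ((G.neighborFinset v).image C)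
  have hS : S.card < (Finset.univ : Finset α).card :=
    calc S.card ≤ ((G.neighborFinset v).image C).card + 1 := Finset.card_insert_le _ _
      _ ≤ G.degree v + 1 := Nat.add_le_add_right Finset.card_image_le 1
      _ < _ := h
  obtain ⟨c, -, hc⟩ := Finset.exists_mem_notMem_of_card_lt_card hS
  refine ⟨c, fun hcv : c = C v => hc (hcv ▸ Finset.mem_insert_self (C v) _),
    fun u hu hcu => hc (Finset.mem_insert_of_mem (Finset.mem_image.mpr ⟨u, ?_, hcu⟩))⟩
  exact (G.mem_neighborFinset v u).mpr hu

end SimpleGraph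

theorem uniquely_colorable_min_degree_general {V : Type*} [Fintype V] (k : ℕ)
    (G : SimpleGraph V) [DecidableRel G.Adj]
    (χ : G.Coloring (Fin k)) (hsurj : Function.Surjective χ)
    (huniq : ∀ (χ₁ χ₂ : G.Coloring (Fin k)) (u v : V), χ₁ u = χ₁ v ↔ χ₂ u = χ₂ v) :
    ∀ v : V, k - 1 ≤ G.degree v := by
  classical
  intro v
  by_contra! hdeg
  obtain ⟨c, hcv, hc⟩ :=
    χ.exists_color_notMem_closedNeighborhood v (by rw [Fintype.card_fin]; omega)
  obtain ⟨u, rfl⟩ := hsurj c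
  have huv : u ≠ v := by rintro rfl; exact hcv rfl
  have hsame : χ.recolor v (χ u) hc u = χ.recolor v (χ u) hc v := by simp [huv]
  exact hcv ((huniq χ _ u v).mpr hsame)

/-- If `G` is uniquely `k`-colorable with `k ≥ 2`, then every vertex of `G` has degree
at least `k - 1`. -/
theorem uniquely_colorable_min_degree {V : Type*} [Fintype V] (k : ℕ) (hk : 2 ≤ k)
    (G : SimpleGraph V) [DecidableRel G.Adj]
    (χ : G.Coloring (Fin k)) (hsurj : Function.Surjective χ)
    (huniq : ∀ (χ₁ χ₂ : G.Coloring (Fin k)) (u v : V), χ₁ u = χ₁ v ↔ χ₂ u = χ₂ v) :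
    ∀ v : V, k - 1 ≤ G.degree v :=
  uniquely_colorable_min_degree_general k G χ hsurj huniq
end

section
/- For all integers n ≥ k ≥ 1, there exists a membership-query decision tree on vertex set V = Fin n that learns the family of all partitions of V into exactly k nonempty blocks and makes at most (k−1)·n − k(k−1)/2 queries on every partition in this family. -/
/-- A membership-query decision tree on vertex set `Fin n`: each internal node is labeled by
an unordered pair of distinct vertices (a membership query), each leaf by a partition of
`Fin n`. -/
inductive MTree (n : ℕ) : Type where
  | leaf : Finpartition (Finset.univ : Finset (Fin n)) → MTree n
  | node : (u v : Fin n) → u ≠ v → MTree n → MTree n → MTree n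

/-- `u` and `v` lie in the same block of the partition `P`. -/
def sameBlock {n : ℕ} (P : Finpartition (Finset.univ : Finset (Fin n))) (u v : Fin n) : Prop :=
  ∃ b ∈ P.parts, u ∈ b ∧ v ∈ b

instance {n : ℕ} (P : Finpartition (Finset.univ : Finset (Fin n))) (u v : Fin n) :
    Decidable (sameBlock P u v) := by
  unfold sameBlock; infer_instance

/-- The leaf reached by executing the tree on hidden partition `P`. -/
def MTree.run {n : ℕ} :
    MTree n → Finpartition (Finset.univ : Finset (Fin n)) →
      Finpartition (Finset.univ : Finset (Fin n))
  | .leaf Q, _ => Q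
  | .node u v _ tyes tno, P => if sameBlock P u v then tyes.run P else tno.run P

/-- The number of queries made on hidden partition `P`. -/
def MTree.queries {n : ℕ} : MTree n → Finpartition (Finset.univ : Finset (Fin n)) → ℕ
  | .leaf _, _ => 0
  | .node u v _ tyes tno, P =>
      1 + (if sameBlock P u v then tyes.queries P else tno.queries P)

/-!
Insert the vertices one at a time, keeping one representative for each block met so far, and
compare each new vertex with the representatives. While fewer than `k` blocks are known, a vertex
that matches none of them opens a new block; once all `k` are known, a vertex that matches none
of `k - 1` of them must lie in the block of the remaining one, which is therefore never asked.
Hence the `i`-th vertex costs at most `min i (k - 1)` queries, and `∑ i < n, min i (k - 1)`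
equals `(k - 1) n - k (k - 1) / 2`.
-/

open Finset Function

lemma Finpartition.eq_of_part_eq {α : Type*} [DecidableEq α] {s : Finset α}
    {P Q : Finpartition s} (h : ∀ a ∈ s, P.part a = Q.part a) : P = Q := by
  ext t
  constructor <;> intro ht
  · obtain ⟨a, ha, rfl⟩ := P.part_surjOn ht
    exact h a ha ▸ Q.part_mem.2 ha
  · obtain ⟨a, ha, rfl⟩ := Q.part_surjOn ht
    exact (h a ha).symm ▸ P.part_mem.2 ha

lemma Finpartition.toFinset_map_part_subset {α : Type*} [Fintype α] [DecidableEq α]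
    (P : Finpartition (univ : Finset α)) (l : List α) : (l.map P.part).toFinset ⊆ P.parts := by
  intro t ht
  obtain ⟨a, -, rfl⟩ := List.mem_map.1 (List.mem_toFinset.1 ht)
  exact P.part_mem.2 (mem_univ a)

instance Setoid.decidableRelKer {α β : Type*} [DecidableEq β] (g : α → β) :
    DecidableRel (Setoid.ker g) :=
  fun a b => decidable_of_iff (g a = g b) Setoid.ker_def.symm

lemma Finpartition.ofSetoid_ker_eq {α β : Type*} [Fintype α] [DecidableEq α]
    (P : Finpartition (univ : Finset α)) (g : α → β) [DecidableRel (Setoid.ker g).r]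
    (hg : ∀ a b, g a = g b ↔ P.part a = P.part b) :
    Finpartition.ofSetoid (Setoid.ker g) = P := by
  refine Finpartition.eq_of_part_eq fun a _ => ?_
  ext b
  rw [Finpartition.mem_part_ofSetoid_iff_rel, Setoid.ker_def, hg,
    P.mem_part_iff_part_eq_part (mem_univ b) (mem_univ a), eq_comm]

variable {n : ℕ}

lemma sameBlock_iff_part_eq {P : Finpartition (univ : Finset (Fin n))} {u v : Fin n} :
    sameBlock P u v ↔ P.part u = P.part v := by
  rw [← P.mem_part_iff_part_eq_part (mem_univ u) (mem_univ v), Finpartition.mem_part_iff_exists]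
  rfl

namespace MTree

def LearnsWithin (t : MTree n) (P : Finpartition (univ : Finset (Fin n))) (C : ℕ) : Prop :=
  t.run P = P ∧ t.queries P ≤ C

lemma LearnsWithin.mono {t : MTree n} {P : Finpartition (univ : Finset (Fin n))} {C C' : ℕ}
    (h : t.LearnsWithin P C) (hC : C ≤ C') : t.LearnsWithin P C' :=
  ⟨h.1, h.2.trans hC⟩

/-- Querying a vertex against itself is not a legal node, but its answer is known: yes. -/
def ask (u v : Fin n) (yes no : MTree n) : MTree n :=
  if h : u = v then yes else .node u v h yes no

lemma ask_learnsWithin {P : Finpartition (univ : Finset (Fin n))} {u v : Fin n}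
    {yes no : MTree n} {C : ℕ} (hyes : sameBlock P u v → yes.LearnsWithin P C)
    (hno : ¬ sameBlock P u v → no.LearnsWithin P C) :
    (ask u v yes no).LearnsWithin P (C + 1) := by
  unfold ask
  split_ifs with huv
  · exact (hyes (sameBlock_iff_part_eq.2 (congrArg P.part huv))).mono (Nat.le_succ C)
  · by_cases hs : sameBlock P u v
    · obtain ⟨hrun, hq⟩ := hyes hs
      exact ⟨by simp [run, hs, hrun], by simp only [queries, if_pos hs]; omega⟩
    · obtain ⟨hrun, hq⟩ := hno hs
      exact ⟨by simp [run, hs, hrun], by simp only [queries, if_neg hs]; omega⟩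

def locate (v : Fin n) (cands : List (Fin n)) (found : Fin n → MTree n) (notFound : MTree n) :
    MTree n :=
  cands.foldr (fun r t => ask v r (found r) t) notFound

lemma locate_learnsWithin {P : Finpartition (univ : Finset (Fin n))} {v : Fin n}
    {found : Fin n → MTree n} {notFound : MTree n} {C : ℕ} (cands : List (Fin n))
    (hfound : ∀ r ∈ cands, sameBlock P v r → (found r).LearnsWithin P C)
    (hnot : (∀ r ∈ cands, ¬ sameBlock P v r) → notFound.LearnsWithin P C) :
    (locate v cands found notFound).LearnsWithin P (C + cands.length) := by
  induction cands with
  | nil => exact hnot (by simp)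
  | cons r rs ih =>
    rw [List.length_cons, ← add_assoc]
    refine ask_learnsWithin (fun hs => (hfound r (by simp) hs).mono (Nat.le_add_right _ _))
      fun hr => ih (fun s hs => hfound s (by simp [hs])) fun hrs => hnot ?_
    simpa [hr] using hrs

end MTree

def queryBudget (k m j : ℕ) : ℕ := ∑ i ∈ range j, min (m + i) (k - 1)

lemma queryBudget_succ (k m j : ℕ) :
    queryBudget k m (j + 1) = min m (k - 1) + queryBudget k (m + 1) j := by
  simp only [queryBudget, sum_range_succ', add_zero, add_comm, add_left_comm]

lemma queryBudget_mono (k j : ℕ) {m m' : ℕ} (h : m ≤ m') :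
    queryBudget k m j ≤ queryBudget k m' j :=
  sum_le_sum fun i _ => min_le_min_right _ (by omega)

lemma two_mul_queryBudget_zero {k n : ℕ} (hkn : k ≤ n) :
    2 * queryBudget k 0 n = k * (k - 1) + 2 * ((n - k) * (k - 1)) := by
  have hinit : ∑ i ∈ range k, min i (k - 1) = ∑ i ∈ range k, i :=
    sum_congr rfl fun i hi => min_eq_left (by simp at hi; omega)
  have htail : ∑ i ∈ range (n - k), min (k + i) (k - 1) = (n - k) * (k - 1) := by
    rw [sum_congr rfl fun i _ => min_eq_right (show k - 1 ≤ k + i by omega)]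
    simp
  rw [queryBudget, ← Nat.add_sub_cancel' hkn, sum_range_add, Nat.add_sub_cancel_left]
  simp only [zero_add, hinit, htail, mul_add, mul_comm 2 (∑ i ∈ range k, i),
    sum_range_id_mul_two]

/-- `reps` lists representatives of distinct blocks of `P`, and `g` sends every vertex that is not
waiting in `todo` to the representative of its block. -/
structure Tracks (P : Finpartition (univ : Finset (Fin n))) (reps : List (Fin n))
    (g : Fin n → Fin n) (todo : List (Fin n)) : Prop where
  nodup : (reps.map P.part).Nodup
  mem : ∀ x ∉ todo, g x ∈ reps
  part_eq : ∀ x ∉ todo, P.part (g x) = P.part x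

namespace Tracks

variable {P : Finpartition (univ : Finset (Fin n))} {reps : List (Fin n)} {g : Fin n → Fin n}
  {todo : List (Fin n)}

lemma init (g : Fin n → Fin n) : Tracks P [] g (List.finRange n) where
  nodup := List.nodup_nil
  mem x hx := absurd (List.mem_finRange x) hx
  part_eq x hx := absurd (List.mem_finRange x) hx

lemma length_le (h : Tracks P reps g todo) : reps.length ≤ #P.parts := by
  simpa [List.toFinset_card_of_nodup h.nodup] using
    card_le_card (P.toFinset_map_part_subset reps)

lemma exists_part_eq_of_length_eq (h : Tracks P reps g todo) (hfull : reps.length = #P.parts)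
    (v : Fin n) : ∃ r ∈ reps, P.part v = P.part r := by
  have hcover : (reps.map P.part).toFinset = P.parts :=
    eq_of_subset_of_card_le (P.toFinset_map_part_subset reps) (by
      rw [List.toFinset_card_of_nodup h.nodup, List.length_map, hfull])
  have hv : P.part v ∈ (reps.map P.part).toFinset := hcover ▸ P.part_mem.2 (mem_univ v)
  obtain ⟨r, hr, hrv⟩ := List.mem_map.1 (List.mem_toFinset.1 hv)
  exact ⟨r, hr, hrv.symm⟩

lemma assign {v r : Fin n} {rest : List (Fin n)} (h : Tracks P reps g (v :: rest))
    (hr : r ∈ reps) (hvr : P.part v = P.part r) : Tracks P reps (update g v r) rest where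
  nodup := h.nodup
  mem x hx := by
    by_cases hxv : x = v
    · simpa [hxv] using hr
    · simpa [hxv] using h.mem x (by simp [hxv, hx])
  part_eq x hx := by
    by_cases hxv : x = v
    · simpa [hxv] using hvr.symm
    · simpa [hxv] using h.part_eq x (by simp [hxv, hx])

lemma addRep {v : Fin n} {rest : List (Fin n)} (h : Tracks P reps g (v :: rest))
    (hnew : ∀ r ∈ reps, P.part v ≠ P.part r) : Tracks P (v :: reps) (update g v v) rest where
  nodup := by
    rw [List.map_cons, List.nodup_cons]
    exact ⟨fun hv => by obtain ⟨r, hr, hrv⟩ := List.mem_map.1 hv; exact hnew r hr hrv.symm,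
      h.nodup⟩
  mem x hx := by
    by_cases hxv : x = v
    · simp [hxv]
    · simpa [hxv] using List.mem_cons_of_mem v (h.mem x (by simp [hxv, hx]))
  part_eq x hx := by
    by_cases hxv : x = v
    · simp [hxv]
    · simpa [hxv] using h.part_eq x (by simp [hxv, hx])

lemma ofSetoid_ker_eq (h : Tracks P reps g []) : Finpartition.ofSetoid (Setoid.ker g) = P := by
  refine P.ofSetoid_ker_eq g fun a b => ⟨fun hab => ?_, fun hab => ?_⟩
  · rw [← h.part_eq a List.not_mem_nil, ← h.part_eq b List.not_mem_nil, hab]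
  · refine List.inj_on_of_nodup_map h.nodup (h.mem a List.not_mem_nil)
      (h.mem b List.not_mem_nil) ?_
    rw [h.part_eq a List.not_mem_nil, h.part_eq b List.not_mem_nil, hab]

end Tracks

open MTree in
/-- Insert the vertices of `todo` one by one, comparing each with the known representatives
`reps`; `g` records the representative found for each inserted vertex. -/
def learnTree (k : ℕ) : List (Fin n) → (Fin n → Fin n) → List (Fin n) → MTree n
  | _, g, [] => .leaf (Finpartition.ofSetoid (Setoid.ker g))
  | reps, g, v :: rest =>
    let assign r := learnTree k reps (update g v r) rest
    if reps.length = k then locate v reps.tail assign (assign (reps.headD v))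
    else locate v reps assign (learnTree k (v :: reps) (update g v v) rest)

lemma learnTree_learnsWithin {k : ℕ} {P : Finpartition (univ : Finset (Fin n))}
    (hP : #P.parts = k) (todo reps : List (Fin n)) (g : Fin n → Fin n)
    (h : Tracks P reps g todo) :
    (learnTree k reps g todo).LearnsWithin P (queryBudget k reps.length todo.length) := by
  induction todo generalizing reps g with
  | nil => exact ⟨h.ofSetoid_ker_eq, by simp [learnTree, MTree.queries]⟩
  | cons v rest ih =>
    have hassign : ∀ r ∈ reps, sameBlock P v r →
        (learnTree k reps (update g v r) rest).LearnsWithin P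
          (queryBudget k reps.length rest.length) :=
      fun r hr hvr => ih reps _ (h.assign hr (sameBlock_iff_part_eq.1 hvr))
    have hgrow := queryBudget_mono k rest.length (Nat.le_add_right reps.length 1)
    rw [List.length_cons, queryBudget_succ]
    by_cases hfull : reps.length = k
    · obtain ⟨r, hr, hvr⟩ := h.exists_part_eq_of_length_eq (hfull.trans hP.symm) v
      obtain ⟨r₀, rs, rfl⟩ := List.exists_cons_of_ne_nil (List.ne_nil_of_mem hr)
      simp only [learnTree, if_pos hfull, List.tail_cons, List.headD_cons]
      refine (MTree.locate_learnsWithin rs (fun r hr => hassign r (by simp [hr]))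
        fun hrs => hassign r₀ (by simp) ?_).mono
          (by simp only [List.length_cons] at hfull hgrow ⊢; omega)
      rcases List.mem_cons.1 hr with rfl | hr
      · exact sameBlock_iff_part_eq.2 hvr
      · exact absurd (sameBlock_iff_part_eq.2 hvr) (hrs r hr)
    · have hlt : reps.length < k := lt_of_le_of_ne (hP ▸ h.length_le) hfull
      simp only [learnTree, if_neg hfull]
      have hnew : (∀ r ∈ reps, ¬ sameBlock P v r) → ∀ r ∈ reps, P.part v ≠ P.part r :=
        fun hrs r hr hvr => hrs r hr (sameBlock_iff_part_eq.2 hvr)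
      refine (MTree.locate_learnsWithin reps (fun r hr hvr => (hassign r hr hvr).mono hgrow)
        fun hrs => ih _ _ (h.addRep (hnew hrs))).mono (by omega)

/-- For `n ≥ k ≥ 1`, there is a membership-query decision tree on `Fin n` that learns the
family of all partitions of `Fin n` into exactly `k` nonempty blocks and makes at most
`(k-1)·n - k(k-1)/2` queries on every partition in this family. -/
theorem membership_query_upper_bound (n k : ℕ) (hk : 1 ≤ k) (hkn : k ≤ n) :
    ∃ t : MTree n, ∀ P : Finpartition (Finset.univ : Finset (Fin n)),
      P.parts.card = k →
        t.run P = P ∧ (t.queries P : ℤ) ≤ ((k : ℤ) - 1) * n - k * (k - 1) / 2 := by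
  refine ⟨learnTree k [] id (List.finRange n), fun P hP => ?_⟩
  obtain ⟨hrun, hq⟩ := learnTree_learnsWithin hP _ [] id (Tracks.init id)
  refine ⟨hrun, ?_⟩
  have hbudget := two_mul_queryBudget_zero hkn
  rw [List.length_nil, List.length_finRange] at hq
  have hsplit : ((k : ℤ) - 1) * n = k * (k - 1) + (n - k) * (k - 1) := by ring
  zify [hk, hkn] at hbudget hq
  rw [hsplit]
  omega
end

section
/- Let n ≥ 1 and let Ĝ be a simple graph on vertex set V = Fin n with m edges. Then there exists a vertex-neighborhood-detection decision tree on V, with each leaf labeled either 'equal' or 'not equal', whose depth is at most m + n, such that for every simple graph G on V the execution path determined by G ends at a leaf labeled 'equal' if and only if G = Ĝ. -/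
/-- A vertex-neighborhood-detection decision tree on vertex set `Fin n` with leaf labels in
`L`: each internal node is labeled by a query `(u, S)` with `u ∉ S`, each leaf by an element
of `L`. -/
inductive NTree (n : ℕ) (L : Type u) : Type u where
  | leaf : L → NTree n L
  | node : (u : Fin n) → (S : Finset (Fin n)) → u ∉ S → NTree n L → NTree n L → NTree n L

open Classical in
/-- The leaf label reached by executing the tree on hidden graph `G`: at a node `(u, S)` take
the yes-branch iff some `v ∈ S` is adjacent to `u` in `G`. -/
noncomputable def NTree.run {n : ℕ} {L : Type u} :
    NTree n L → SimpleGraph (Fin n) → L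
  | .leaf l, _ => l
  | .node u S _ tyes tno, G =>
      if ∃ v ∈ S, G.Adj u v then tyes.run G else tno.run G

open Classical in
/-- The number of queries made on hidden graph `G`. -/
noncomputable def NTree.queries {n : ℕ} {L : Type u} :
    NTree n L → SimpleGraph (Fin n) → ℕ
  | .leaf _, _ => 0
  | .node u S _ tyes tno, G =>
      1 + (if ∃ v ∈ S, G.Adj u v then tyes.queries G else tno.queries G)

/-- The depth of the tree: the maximum length of a root-to-leaf path. -/
def NTree.depth {n : ℕ} {L : Type u} : NTree n L → ℕ
  | .leaf _ => 0
  | .node _ _ _ tyes tno => 1 + max tyes.depth tno.depth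

/-!
Verification of `Ĝ` amounts to two inclusions. `G ≤ Ĝ` is checked with one query per vertex
`u`, asking whether `u` has a `G`-neighbour among its non-neighbours in `Ĝ` (expected answer: no);
`Ĝ ≤ G` is checked with one query per edge `uv` of `Ĝ`, asking whether `v` is a `G`-neighbour of
`u` (expected answer: yes). Running these `n + m` queries in sequence and rejecting at the first
unexpected answer gives a tree of depth `n + m`.
-/

theorem Sym2.inf_ne_sup_of_not_isDiag {α : Type*} [LinearOrder α] {e : Sym2 α} (he : ¬e.IsDiag) :
    e.inf ≠ e.sup := by
  induction e with
  | _ a b => simpa [inf_eq_sup] using he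

theorem Sym2.mk_inf_sup {α : Type*} [LinearOrder α] (e : Sym2 α) : s(e.inf, e.sup) = e :=
  Sym2.sortEquiv.symm_apply_apply e

namespace NTree

variable {n : ℕ}

structure Query (n : ℕ) where
  u : Fin n
  S : Finset (Fin n)
  u_not_mem : u ∉ S

def Query.Answer (q : Query n) (G : SimpleGraph (Fin n)) : Prop :=
  ∃ v ∈ q.S, G.Adj q.u v

abbrev Check (n : ℕ) := Query n × Bool

def Check.Passes (c : Check n) (G : SimpleGraph (Fin n)) : Prop :=
  c.1.Answer G ↔ c.2 = true

def verify : List (Check n) → NTree n Bool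
  | [] => .leaf true
  | (q, true) :: l => .node q.u q.S q.u_not_mem (verify l) (.leaf false)
  | (q, false) :: l => .node q.u q.S q.u_not_mem (.leaf false) (verify l)

theorem depth_verify (l : List (Check n)) : (verify l).depth = l.length := by
  induction l with
  | nil => rfl
  | cons c l ih =>
    obtain ⟨q, _ | _⟩ := c <;> simp [verify, depth, ih, add_comm]

theorem run_verify_eq_true_iff (l : List (Check n)) (G : SimpleGraph (Fin n)) :
    (verify l).run G = true ↔ ∀ c ∈ l, c.Passes G := by
  induction l with
  | nil => simp [verify, run]
  | cons c l ih =>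
    obtain ⟨q, _ | _⟩ := c <;>
      by_cases hq : q.Answer G <;> simp_all [verify, run, Check.Passes, Query.Answer]

section Verification

variable (Ghat : SimpleGraph (Fin n)) [DecidableRel Ghat.Adj]

def nonNeighborCheck (u : Fin n) : Check n :=
  (⟨u, {v | v ≠ u ∧ ¬Ghat.Adj u v}, by simp⟩, false)

def edgeCheck (e : Sym2 (Fin n)) (he : ¬e.IsDiag) : Check n :=
  (⟨e.inf, {e.sup}, by simpa using Sym2.inf_ne_sup_of_not_isDiag he⟩, true)

noncomputable def verificationChecks : List (Check n) :=
  (List.finRange n).map (nonNeighborCheck Ghat) ++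
    Ghat.edgeFinset.attach.toList.map fun e : {e // e ∈ Ghat.edgeFinset} =>
      edgeCheck e.1 (Ghat.not_isDiag_of_mem_edgeSet (SimpleGraph.mem_edgeFinset.1 e.2))

variable {Ghat}

theorem nonNeighborCheck_passes_iff (u : Fin n) (G : SimpleGraph (Fin n)) :
    (nonNeighborCheck Ghat u).Passes G ↔ ∀ v, G.Adj u v → Ghat.Adj u v := by
  simp only [Check.Passes, Query.Answer, nonNeighborCheck, Finset.mem_filter_univ,
    Bool.false_eq_true, iff_false, not_exists, not_and, and_imp]
  refine forall_congr' fun v => ⟨fun h hG => ?_, fun h _ hGhat hG => hGhat (h hG)⟩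
  by_contra hGhat
  exact h (G.ne_of_adj hG).symm hGhat hG

theorem edgeCheck_passes_iff {e : Sym2 (Fin n)} (he : ¬e.IsDiag) (G : SimpleGraph (Fin n)) :
    (edgeCheck e he).Passes G ↔ e ∈ G.edgeSet := by
  conv_rhs => rw [← Sym2.mk_inf_sup e]
  simp [Check.Passes, Query.Answer, edgeCheck]

theorem length_verificationChecks :
    (verificationChecks Ghat).length = n + Ghat.edgeFinset.card := by
  simp [verificationChecks]

theorem forall_passes_verificationChecks_iff (G : SimpleGraph (Fin n)) :
    (∀ c ∈ verificationChecks Ghat, c.Passes G) ↔ G = Ghat := by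
  simp only [verificationChecks, List.forall_mem_append, List.forall_mem_map,
    List.mem_finRange, Finset.mem_toList, Finset.mem_attach, forall_const, Subtype.forall,
    SimpleGraph.mem_edgeFinset, nonNeighborCheck_passes_iff, edgeCheck_passes_iff]
  rw [le_antisymm_iff, ← SimpleGraph.edgeSet_subset_edgeSet (G₁ := Ghat)]
  rfl

end Verification

end NTree

open NTree in
theorem graph_verification_upper_bound_general (n : ℕ)
    (Ghat : SimpleGraph (Fin n)) (m : ℕ) (hm : Ghat.edgeSet.ncard = m) :
    ∃ t : NTree n Bool, t.depth ≤ m + n ∧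
      ∀ G : SimpleGraph (Fin n), (t.run G = true ↔ G = Ghat) := by
  classical
  refine ⟨verify (verificationChecks Ghat), le_of_eq ?_, fun G => ?_⟩
  · rw [depth_verify, length_verificationChecks, ← hm, ← SimpleGraph.coe_edgeFinset,
      Set.ncard_coe_finset, add_comm]
  · rw [run_verify_eq_true_iff, forall_passes_verificationChecks_iff]

/-- Graph verification with vertex-neighborhood-detection queries: for every known graph `Ĝ`
on `Fin n` with `m` edges there is a decision tree of depth at most `m + n`, with Boolean
leaves, that on every hidden graph `G` outputs `true` iff `G = Ĝ`. -/
theorem graph_verification_upper_bound (n : ℕ) (hn : 1 ≤ n)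
    (Ghat : SimpleGraph (Fin n)) (m : ℕ) (hm : Ghat.edgeSet.ncard = m) :
    ∃ t : NTree n Bool, t.depth ≤ m + n ∧
      ∀ G : SimpleGraph (Fin n), (t.run G = true ↔ G = Ghat) :=
  graph_verification_upper_bound_general n Ghat m hm
end

section
/- For every n ≥ 2 there exists a vertex-neighborhood-detection decision tree on vertex set V = Fin n, with leaves labeled by simple graphs on V, such that for every simple graph G on V the execution path determined by G ends at a leaf labeled G, and the length of this path is at most n + 8·|E(G)|·(⌈log₂ n⌉ + 1). -/
/-!
For each vertex `u`, ask whether `u` has a neighbour among the candidates not yet found; while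
the answer is yes, a binary search that halves the candidate list with each query locates one
such neighbour in at most `⌈log₂ n⌉` further queries. So `u` costs `1 + deg u · (⌈log₂ n⌉ + 1)`
queries, and summing over `u` gives `n + 2|E(G)|(⌈log₂ n⌉ + 1)`.
-/

theorem SimpleGraph.exists_mem_erase_adj_iff {V : Type*} [DecidableEq V] {G : SimpleGraph V}
    {u : V} {S : Finset V} : (∃ v ∈ S.erase u, G.Adj u v) ↔ ∃ v ∈ S, G.Adj u v :=
  ⟨fun ⟨v, hv, h⟩ => ⟨v, Finset.mem_of_mem_erase hv, h⟩,
    fun ⟨v, hv, h⟩ => ⟨v, Finset.mem_erase.2 ⟨(G.ne_of_adj h).symm, hv⟩, h⟩⟩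

namespace NTree

open Classical Finset

variable {n : ℕ} {L M : Type*} (G : SimpleGraph (Fin n))

def bind : NTree n L → (L → NTree n M) → NTree n M
  | .leaf l, k => k l
  | .node u S hu tyes tno, k => .node u S hu (tyes.bind k) (tno.bind k)

theorem run_bind (t : NTree n L) (k : L → NTree n M) :
    (t.bind k).run G = (k (t.run G)).run G := by
  induction t with
  | leaf => rfl
  | node u S hu tyes tno ihy ihn => simp only [bind, run]; split_ifs <;> assumption

theorem queries_bind (t : NTree n L) (k : L → NTree n M) :
    (t.bind k).queries G = t.queries G + (k (t.run G)).queries G := by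
  induction t with
  | leaf => simp [bind, queries, run]
  | node u S hu tyes tno ihy ihn => simp only [bind, queries, run]; split_ifs <;> omega

/-- Removing `u` from the queried set changes no answer, since `G.Adj u u` never holds. -/
def query (u : Fin n) (S : Finset (Fin n)) (tyes tno : NTree n L) : NTree n L :=
  .node u (S.erase u) (notMem_erase u S) tyes tno

theorem run_query (u : Fin n) (S : Finset (Fin n)) (tyes tno : NTree n L) :
    (query u S tyes tno).run G = if ∃ v ∈ S, G.Adj u v then tyes.run G else tno.run G := by
  simp only [query, run, SimpleGraph.exists_mem_erase_adj_iff]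

theorem queries_query (u : Fin n) (S : Finset (Fin n)) (tyes tno : NTree n L) :
    (query u S tyes tno).queries G =
      1 + if ∃ v ∈ S, G.Adj u v then tyes.queries G else tno.queries G := by
  simp only [query, queries, SimpleGraph.exists_mem_erase_adj_iff]

noncomputable def findNeighbor (u : Fin n) (l : List (Fin n)) : NTree n (Fin n) :=
  if h : l.length ≤ 1 then .leaf (l.headD u)
  else
    query u (l.take (l.length / 2)).toFinset
      (findNeighbor u (l.take (l.length / 2))) (findNeighbor u (l.drop (l.length / 2)))
termination_by l.length
decreasing_by all_goals simp only [List.length_take, List.length_drop]; omega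

theorem findNeighbor_mem_adj (u : Fin n) (l : List (Fin n)) (h : ∃ v ∈ l, G.Adj u v) :
    (findNeighbor u l).run G ∈ l ∧ G.Adj u ((findNeighbor u l).run G) := by
  fun_induction findNeighbor u l with
  | case1 l hl =>
    obtain _ | ⟨a, _ | ⟨b, l⟩⟩ := l
    · simp at h
    · simpa [run] using h
    · simp at hl
  | case2 l hl ih1 ih2 =>
    rw [run_query]
    split_ifs with hyes
    · obtain ⟨hv, hadj⟩ := ih1 (by simpa using hyes)
      exact ⟨List.mem_of_mem_take hv, hadj⟩
    · have hdrop : ∃ v ∈ l.drop (l.length / 2), G.Adj u v := by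
        obtain ⟨v, hv, hadj⟩ := h
        rw [← List.take_append_drop (l.length / 2) l, List.mem_append] at hv
        exact ⟨v, hv.resolve_left fun hv' => hyes ⟨v, List.mem_toFinset.2 hv', hadj⟩, hadj⟩
      obtain ⟨hv, hadj⟩ := ih2 hdrop
      exact ⟨List.mem_of_mem_drop hv, hadj⟩

theorem queries_findNeighbor_le (u : Fin n) (l : List (Fin n)) :
    (findNeighbor u l).queries G ≤ Nat.clog 2 l.length := by
  fun_induction findNeighbor u l with
  | case1 l hl => simp [queries]
  | case2 l hl ih1 ih2 =>
    have hclog : Nat.clog 2 l.length = Nat.clog 2 ((l.length + 1) / 2) + 1 :=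
      Nat.clog_of_two_le one_lt_two (by omega)
    have htake : Nat.clog 2 (l.take (l.length / 2)).length ≤ Nat.clog 2 ((l.length + 1) / 2) :=
      Nat.clog_mono_right 2 (by simp only [List.length_take]; omega)
    have hdrop : Nat.clog 2 (l.drop (l.length / 2)).length ≤ Nat.clog 2 ((l.length + 1) / 2) :=
      Nat.clog_mono_right 2 (by simp only [List.length_drop]; omega)
    rw [queries_query]
    split_ifs <;> omega

-- The search does return a vertex of `s`; the `v ∈ s` test only serves the termination proof.
noncomputable def findNeighbors (u : Fin n) (s : Finset (Fin n)) : NTree n (Finset (Fin n)) :=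
  query u s
    ((findNeighbor u s.toList).bind fun v =>
      if _ : v ∈ s then (findNeighbors u (s.erase v)).bind fun N => .leaf (insert v N)
      else .leaf ∅)
    (.leaf ∅)
termination_by #s
decreasing_by exact card_erase_lt_of_mem ‹_›

theorem run_findNeighbors (u : Fin n) (s : Finset (Fin n)) :
    (findNeighbors u s).run G = s.filter (G.Adj u) := by
  fun_induction findNeighbors u s with
  | case1 s ih =>
    rw [run_query]
    split_ifs with hyes
    · obtain ⟨hv, hadj⟩ := findNeighbor_mem_adj G u s.toList (by simpa using hyes)
      rw [mem_toList] at hv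
      rw [run_bind, dif_pos hv, run_bind, ih _ hv, run, filter_erase,
        insert_erase (mem_filter.2 ⟨hv, hadj⟩)]
    · exact (filter_eq_empty_iff.2 fun v hv hadj => hyes ⟨v, hv, hadj⟩).symm

theorem queries_findNeighbors_le (u : Fin n) (s : Finset (Fin n)) :
    (findNeighbors u s).queries G ≤ 1 + #(s.filter (G.Adj u)) * (Nat.clog 2 #s + 1) := by
  fun_induction findNeighbors u s with
  | case1 s ih =>
    rw [queries_query]
    split_ifs with hyes
    · obtain ⟨hv, hadj⟩ := findNeighbor_mem_adj G u s.toList (by simpa using hyes)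
      rw [mem_toList] at hv
      rw [queries_bind, dif_pos hv, queries_bind]
      set v := (findNeighbor u s.toList).run G
      have hcard : #((s.erase v).filter (G.Adj u)) + 1 = #(s.filter (G.Adj u)) := by
        rw [filter_erase, card_erase_add_one (mem_filter.2 ⟨hv, hadj⟩)]
      have hrest : (findNeighbors u (s.erase v)).queries G ≤
          1 + #((s.erase v).filter (G.Adj u)) * (Nat.clog 2 #s + 1) :=
        (ih v hv).trans (by gcongr; exact erase_subset v s)
      have hsearch := queries_findNeighbor_le G u s.toList
      rw [length_toList] at hsearch
      rw [← hcard, add_one_mul]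
      simp only [queries]
      omega
    · simp [queries]

def pi : {k : ℕ} → (Fin k → NTree n M) → NTree n (Fin k → M)
  | 0, _ => .leaf finZeroElim
  | _ + 1, t => (t 0).bind fun x => (pi fun i => t i.succ).bind fun xs => .leaf (Fin.cons x xs)

theorem run_pi {k : ℕ} (t : Fin k → NTree n M) :
    (pi t).run G = fun i => (t i).run G := by
  induction k with
  | zero => funext i; exact i.elim0
  | succ k ih =>
    rw [pi, run_bind, run_bind, ih]
    funext i
    refine Fin.cases rfl (fun i => rfl) i

theorem queries_pi {k : ℕ} (t : Fin k → NTree n M) :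
    (pi t).queries G = ∑ i, (t i).queries G := by
  induction k with
  | zero => rfl
  | succ k ih => rw [pi, queries_bind, queries_bind, ih, Fin.sum_univ_succ]; rfl

noncomputable def learnGraph (n : ℕ) : NTree n (SimpleGraph (Fin n)) :=
  (pi fun u => findNeighbors u univ).bind fun N => .leaf (SimpleGraph.fromRel fun u v => v ∈ N u)

theorem run_learnGraph : (learnGraph n).run G = G := by
  ext u v
  simp only [learnGraph, run_bind, run_pi, run_findNeighbors, run, SimpleGraph.fromRel_adj,
    mem_filter, mem_univ, true_and, G.adj_comm v u, or_self]
  exact and_iff_right_of_imp G.ne_of_adj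

theorem queries_learnGraph_le :
    (learnGraph n).queries G ≤ n + 2 * #G.edgeFinset * (Nat.clog 2 n + 1) := by
  have hdegree (u : Fin n) : #(univ.filter (G.Adj u)) = G.degree u := by
    rw [← G.neighborFinset_eq_filter, G.card_neighborFinset_eq_degree]
  rw [learnGraph, queries_bind, queries_pi]
  calc ∑ u, (findNeighbors u univ).queries G + _
      ≤ ∑ u, (1 + G.degree u * (Nat.clog 2 n + 1)) + 0 := by
        gcongr with u
        · simpa [hdegree] using queries_findNeighbors_le G u univ
        · simp [queries]
    _ = n + 2 * #G.edgeFinset * (Nat.clog 2 n + 1) := by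
        rw [sum_add_distrib, ← sum_mul, G.sum_degrees_eq_twice_card_edges]
        simp

end NTree

theorem graph_learning_upper_bound_general (n : ℕ) :
    ∃ t : NTree n (SimpleGraph (Fin n)), ∀ G : SimpleGraph (Fin n),
      t.run G = G ∧ t.queries G ≤ n + 8 * G.edgeSet.ncard * (Nat.clog 2 n + 1) := by
  classical
  refine ⟨NTree.learnGraph n, fun G => ⟨NTree.run_learnGraph G, ?_⟩⟩
  rw [← SimpleGraph.coe_edgeFinset, Set.ncard_coe_finset]
  exact (NTree.queries_learnGraph_le G).trans (by gcongr; norm_num)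

/-- Graph learning with vertex-neighborhood-detection queries: for every `n ≥ 2` there is a
decision tree on `Fin n`, with leaves labeled by graphs, that on every hidden graph `G`
outputs `G` while making at most `n + 8·|E(G)|·(⌈log₂ n⌉ + 1)` queries. -/
theorem graph_learning_upper_bound (n : ℕ) (hn : 2 ≤ n) :
    ∃ t : NTree n (SimpleGraph (Fin n)), ∀ G : SimpleGraph (Fin n),
      t.run G = G ∧ t.queries G ≤ n + 8 * G.edgeSet.ncard * (Nat.clog 2 n + 1) :=
  graph_learning_upper_bound_general n
end

section
/- Let n and m be integers with m ≥ 1 and 2m ≤ n(n−1)/2. Then every vertex-neighborhood-detection decision tree on vertex set V = Fin n that learns the family of all simple graphs on V with exactly m edges has depth at least m. -/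
/-!
Information-theoretic bound: a tree of depth `d` has at most `2 ^ d` leaves, and a tree that
learns a family must reach a distinct leaf for each member. There are `C(N, m)` graphs with `m`
edges, where `N = n(n-1)/2`, and `C(N, m) ≥ C(2m, m) ≥ 2 ^ m` as soon as `2m ≤ N`.
-/

open Finset

namespace Nat

theorem two_pow_le_centralBinom (m : ℕ) : 2 ^ m ≤ centralBinom m := by
  induction m with
  | zero => simp
  | succ m ih =>
    refine Nat.le_of_mul_le_mul_left ?_ m.succ_pos
    calc (m + 1) * 2 ^ (m + 1) = 2 * (m + 1) * 2 ^ m := by ring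
      _ ≤ 2 * (2 * m + 1) * centralBinom m := by gcongr; omega
      _ = (m + 1) * centralBinom (m + 1) := (succ_mul_centralBinom_succ m).symm

theorem two_pow_le_choose {N m : ℕ} (h : 2 * m ≤ N) : 2 ^ m ≤ N.choose m :=
  (two_pow_le_centralBinom m).trans (centralBinom_eq_two_mul_choose m ▸ choose_le_choose m h)

end Nat

namespace SimpleGraph

variable {V : Type*}

theorem edgeSet_fromEdgeSet_of_subset {s : Set (Sym2 V)} (h : s ⊆ (⊤ : SimpleGraph V).edgeSet) :
    (fromEdgeSet s).edgeSet = s := by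
  rw [edgeSet_fromEdgeSet, sdiff_eq_left, ← Set.subset_compl_iff_disjoint_right]
  rwa [← edgeSet_top]

open Classical in
theorem card_filter_ncard_edgeSet_eq [Fintype V] [DecidableEq V] (m : ℕ) :
    #{G : SimpleGraph V | G.edgeSet.ncard = m} = ((Fintype.card V).choose 2).choose m := by
  rw [← card_edgeFinset_top_eq_card_choose_two, ← card_powersetCard]
  have subset_top {s : Finset (Sym2 V)} (hs : s ⊆ (⊤ : SimpleGraph V).edgeFinset) :
      (s : Set (Sym2 V)) ⊆ (⊤ : SimpleGraph V).edgeSet := by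
    rw [← coe_edgeFinset]; exact_mod_cast hs
  refine card_nbij' (fun G => G.edgeFinset) (fun s => fromEdgeSet s) ?_ ?_ ?_ ?_
  · intro G hG
    rw [coe_filter, Set.mem_ofPred_eq] at hG
    rw [mem_coe, mem_powersetCard, ← hG.2, ← Set.ncard_coe_finset, coe_edgeFinset]
    exact ⟨edgeFinset_mono le_top, rfl⟩
  · intro s hs
    rw [mem_coe, mem_powersetCard] at hs
    simp [edgeSet_fromEdgeSet_of_subset (subset_top hs.1), hs.2]
  · intro G _
    simp only [coe_edgeFinset, fromEdgeSet_edgeSet]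
  · intro s hs
    rw [mem_coe, mem_powersetCard] at hs
    rw [← coe_inj, coe_edgeFinset, edgeSet_fromEdgeSet_of_subset (subset_top hs.1)]

end SimpleGraph

namespace NTree

variable {n : ℕ} {L : Type*} [DecidableEq L]

def leaves : NTree n L → Finset L
  | .leaf l => {l}
  | .node _ _ _ tyes tno => tyes.leaves ∪ tno.leaves

theorem run_mem_leaves (t : NTree n L) (G : SimpleGraph (Fin n)) : t.run G ∈ t.leaves := by
  induction t with
  | leaf l => simp [run, leaves]
  | node u S h tyes tno ihyes ihno =>
    rw [run, leaves]
    split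
    · exact mem_union_left _ ihyes
    · exact mem_union_right _ ihno

theorem card_leaves_le_two_pow_depth (t : NTree n L) : #t.leaves ≤ 2 ^ t.depth := by
  induction t with
  | leaf l => simp [leaves, depth]
  | node u S h tyes tno ihyes ihno =>
    calc #(tyes.leaves ∪ tno.leaves) ≤ #tyes.leaves + #tno.leaves := card_union_le _ _
      _ ≤ 2 ^ max tyes.depth tno.depth + 2 ^ max tyes.depth tno.depth := by
        gcongr
        · exact ihyes.trans (Nat.pow_le_pow_right two_pos (le_max_left _ _))
        · exact ihno.trans (Nat.pow_le_pow_right two_pos (le_max_right _ _))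
      _ = 2 ^ (node u S h tyes tno).depth := by rw [depth]; ring

theorem card_le_two_pow_depth_of_run_eq_self (t : NTree n (SimpleGraph (Fin n)))
    {F : Finset (SimpleGraph (Fin n))} (hF : ∀ G ∈ F, t.run G = G) : #F ≤ 2 ^ t.depth := by
  classical
  exact (card_le_card fun G hG => hF G hG ▸ t.run_mem_leaves G).trans
    t.card_leaves_le_two_pow_depth

end NTree

theorem graph_learning_lower_bound_general (n m : ℕ) (hmn : 2 * m ≤ n * (n - 1) / 2)
    (t : NTree n (SimpleGraph (Fin n)))
    (hlearn : ∀ G : SimpleGraph (Fin n), G.edgeSet.ncard = m → t.run G = G) :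
    m ≤ t.depth := by
  classical
  have hlearned : #{G : SimpleGraph (Fin n) | G.edgeSet.ncard = m} ≤ 2 ^ t.depth :=
    t.card_le_two_pow_depth_of_run_eq_self fun G hG => hlearn G (mem_filter.mp hG).2
  have hcount : 2 ^ m ≤ #{G : SimpleGraph (Fin n) | G.edgeSet.ncard = m} := by
    rw [SimpleGraph.card_filter_ncard_edgeSet_eq, Fintype.card_fin, Nat.choose_two_right]
    exact Nat.two_pow_le_choose hmn
  exact (Nat.pow_le_pow_iff_right one_lt_two).mp (hcount.trans hlearned)

/-- Graph learning lower bound: for `m ≥ 1` with `2m ≤ n(n-1)/2`, every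
vertex-neighborhood-detection decision tree that learns the family of all graphs on `Fin n`
with exactly `m` edges has depth at least `m`. -/
theorem graph_learning_lower_bound (n m : ℕ) (hm : 1 ≤ m) (hmn : 2 * m ≤ n * (n - 1) / 2)
    (t : NTree n (SimpleGraph (Fin n)))
    (hlearn : ∀ G : SimpleGraph (Fin n), G.edgeSet.ncard = m → t.run G = G) :
    m ≤ t.depth :=
  graph_learning_lower_bound_general n m hmn t hlearn
end
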